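/- Let r, k ≥ 1, reals α₁,…,α_r, β₁,…,β_k with 1,α₁,…,α_r,β₁,…,β_k linearly independent over ℚ, and let m_ν, ζ_ν, M_ν be the best-approximation data of (α₁,…,α_r). Fix ν. Suppose that for every integer point (m₀,…,m_{r+k}) with max_{1≤j≤r+k}|m_j| ≤ M_{ν+1} and (m_{r+1},…,m_{r+k}) ≠ (0,…,0), one has |m₀ + Σ_{j=1}^r m_jα_j + Σ_{i=1}^k m_{r+i}β_i| ≥ ζ_ν. Then the point m_ν* = (m_{0,ν},…,m_{r,ν},0,…,0) ∈ ℤ^{r+k+1} is a best approximation for the (r+k)-tuple (α₁,…,α_r,β₁,…,β_k). -/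

import Mathlib

open Finset MeasureTheory

/-- The value of the linear form: `ζ(m) = m₀ + Σ mⱼ αⱼ`. -/
def zetaF {r : ℕ} (α : Fin r → ℝ) (m₀ : ℤ) (m : Fin r → ℤ) : ℝ :=
  (m₀ : ℝ) + ∑ j, (m j : ℝ) * α j

/-- `M(m) = max_{1 ≤ j ≤ r} |m_j|` (as a natural number). -/
def Mnorm {r : ℕ} (m : Fin r → ℤ) : ℕ :=
  Finset.univ.sup fun j => (m j).natAbs

/-- `m = (m₀, m₁, …, m_r)` is a best approximation (in the sense of linear form)
for `α₁, …, α_r`. -/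
def IsBestApprox {r : ℕ} (α : Fin r → ℝ) (m₀ : ℤ) (m : Fin r → ℤ) : Prop :=
  m ≠ 0 ∧ 0 < zetaF α m₀ m ∧
    ∀ (n₀ : ℤ) (n : Fin r → ℤ), n ≠ 0 → Mnorm n ≤ Mnorm m →
      zetaF α m₀ m ≤ |zetaF α n₀ n|

/-- `(mz ν, m ν)` is the sequence of all best approximations, ordered by
strictly increasing `M_ν`. -/
def IsBASeq {r : ℕ} (α : Fin r → ℝ) (mz : ℕ → ℤ) (m : ℕ → Fin r → ℤ) : Prop :=
  (∀ ν, IsBestApprox α (mz ν) (m ν)) ∧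
  StrictMono (fun ν => Mnorm (m ν)) ∧
  ∀ (p₀ : ℤ) (p : Fin r → ℤ), IsBestApprox α p₀ p → ∃ ν, p₀ = mz ν ∧ p = m ν

/-- `1, α₁, …, α_r` are linearly independent over `ℚ`. -/
def LinIndepWithOne {r : ℕ} (α : Fin r → ℝ) : Prop :=
  LinearIndependent ℚ (Fin.cons (1 : ℝ) α : Fin (r + 1) → ℝ)

/-- `(α₁, …, α_r)` is a `ψ`-singular tuple (in the sense of linear form). -/
def IsPsiSingular {r : ℕ} (α : Fin r → ℝ) (ψ : ℝ → ℝ) : Prop :=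
  ∀ T : ℝ, 1 < T → ∃ n : Fin r → ℤ, n ≠ 0 ∧ (∀ j, (|n j| : ℝ) ≤ T) ∧
    ∃ n₀ : ℤ, |zetaF α n₀ n| < ψ T

/-! Appending zeros to a best approximation of `α` leaves both the value of the linear form and
the height `M` unchanged. Competitors `(n, p)` with `p = 0` are handled by the minimality of
`m_ν` for `α` alone; those with `p ≠ 0` have height at most `M_ν < M_{ν+1}`, so the hypothesis
bounds their value from below by `ζ_ν`. -/

section Append

variable {r k : ℕ}

lemma zetaF_append (α : Fin r → ℝ) (β : Fin k → ℝ) (n₀ : ℤ) (u : Fin r → ℤ) (p : Fin k → ℤ) :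
    zetaF (Fin.append α β) n₀ (Fin.append u p) = zetaF α n₀ u + ∑ i, (p i : ℝ) * β i := by
  simp [zetaF, Fin.sum_univ_add, add_assoc]

lemma zetaF_append_zero (α : Fin r → ℝ) (β : Fin k → ℝ) (n₀ : ℤ) (u : Fin r → ℤ) :
    zetaF (Fin.append α β) n₀ (Fin.append u 0) = zetaF α n₀ u := by
  simp [zetaF_append]

lemma natAbs_le_Mnorm (n : Fin r → ℤ) (j : Fin r) : (n j).natAbs ≤ Mnorm n :=
  Finset.le_sup (f := fun j => (n j).natAbs) (mem_univ j)

lemma Mnorm_append (u : Fin r → ℤ) (p : Fin k → ℤ) :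
    Mnorm (Fin.append u p) = max (Mnorm u) (Mnorm p) := by
  refine le_antisymm (Finset.sup_le fun i _ => ?_) (max_le ?_ ?_)
  · refine Fin.addCases (fun j => ?_) (fun j => ?_) i
    · simpa using (natAbs_le_Mnorm u j).trans (le_max_left _ _)
    · simpa using (natAbs_le_Mnorm p j).trans (le_max_right _ _)
  · exact Finset.sup_le fun j _ => by
      simpa using natAbs_le_Mnorm (Fin.append u p) (Fin.castAdd k j)
  · exact Finset.sup_le fun j _ => by
      simpa using natAbs_le_Mnorm (Fin.append u p) (Fin.natAdd r j)

@[simp]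
lemma Mnorm_zero : Mnorm (0 : Fin r → ℤ) = 0 := by
  simp [Mnorm]

theorem IsBestApprox.append_zero {α : Fin r → ℝ} {β : Fin k → ℝ} {m₀ : ℤ} {u : Fin r → ℤ}
    (hu : IsBestApprox α m₀ u)
    (hβ : ∀ (n₀ : ℤ) (n : Fin r → ℤ) (p : Fin k → ℤ), p ≠ 0 →
      max (Mnorm n) (Mnorm p) ≤ Mnorm u → zetaF α m₀ u ≤ |zetaF α n₀ n + ∑ i, (p i : ℝ) * β i|) :
    IsBestApprox (Fin.append α β) m₀ (Fin.append u 0) := by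
  obtain ⟨hu_ne, hu_pos, hu_min⟩ := hu
  refine ⟨fun h => hu_ne (funext fun j => by simpa using congrFun h (Fin.castAdd k j)),
    by rwa [zetaF_append_zero], fun n₀ n hn hle => ?_⟩
  obtain ⟨v, p, rfl⟩ : ∃ v p, n = Fin.append v p := ⟨_, _, Fin.append_castAdd_natAdd.symm⟩
  rw [Mnorm_append, Mnorm_append, Mnorm_zero, max_eq_left (Nat.zero_le _)] at hle
  rw [zetaF_append_zero, zetaF_append]
  by_cases hp : p = 0
  · subst hp
    have hv : v ≠ 0 := fun hv => hn (funext fun i => Fin.addCases (by simp [hv]) (by simp) i)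
    simpa using hu_min n₀ v hv (le_of_max_le_left hle)
  · exact hβ n₀ v p hp hle

end Append

theorem stmt19_general (r k : ℕ) (α : Fin r → ℝ) (β : Fin k → ℝ)
    (mz : ℕ → ℤ) (m : ℕ → Fin r → ℤ) (hBA : IsBASeq α mz m) (ν : ℕ)
    (hyp : ∀ (n₀ : ℤ) (n : Fin r → ℤ) (p : Fin k → ℤ),
      (∀ j, (n j).natAbs ≤ Mnorm (m (ν + 1))) →
      (∀ i, (p i).natAbs ≤ Mnorm (m (ν + 1))) → p ≠ 0 →
      zetaF α (mz ν) (m ν) ≤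
        |(n₀ : ℝ) + ∑ j, (n j : ℝ) * α j + ∑ i, (p i : ℝ) * β i|) :
    IsBestApprox (Fin.append α β) (mz ν) (Fin.append (m ν) (0 : Fin k → ℤ)) := by
  obtain ⟨hbest, hmono, -⟩ := hBA
  refine (hbest ν).append_zero fun n₀ n p hp hle => ?_
  have hbound : max (Mnorm n) (Mnorm p) ≤ Mnorm (m (ν + 1)) :=
    hle.trans (hmono ν.lt_succ_self).le
  exact hyp n₀ n p (fun j => (natAbs_le_Mnorm n j).trans (le_of_max_le_left hbound))
    (fun i => (natAbs_le_Mnorm p i).trans (le_of_max_le_right hbound)) hp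

/-- if no small value of the extended linear form exists with coefficients
bounded by `M_{ν+1}`, then `m_ν* = (m_ν, 0, …, 0)` is a best approximation of the extended
tuple. -/
theorem stmt19 (r k : ℕ) (hr : 1 ≤ r) (hk : 1 ≤ k) (α : Fin r → ℝ) (β : Fin k → ℝ)
    (hαβ : LinIndepWithOne (Fin.append α β))
    (mz : ℕ → ℤ) (m : ℕ → Fin r → ℤ) (hBA : IsBASeq α mz m) (ν : ℕ)
    (hyp : ∀ (n₀ : ℤ) (n : Fin r → ℤ) (p : Fin k → ℤ),
      (∀ j, (n j).natAbs ≤ Mnorm (m (ν + 1))) →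
      (∀ i, (p i).natAbs ≤ Mnorm (m (ν + 1))) → p ≠ 0 →
      zetaF α (mz ν) (m ν) ≤
        |(n₀ : ℝ) + ∑ j, (n j : ℝ) * α j + ∑ i, (p i : ℝ) * β i|) :
    IsBestApprox (Fin.append α β) (mz ν) (Fin.append (m ν) (0 : Fin k → ℤ)) :=
  stmt19_general r k α β mz m hBA ν hyp
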